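/- Let G be a finite simple graph, d ≥ 1 an integer, u a vertex of G, and let H be obtained from G by attaching a pendant clique C of r ≥ 2d+1 vertices to u. Then no edge of H with at least one endpoint in C belongs to the edge cut of any d-cut of H. -/

import Mathlib

variable {V : Type*}

/-- A `d`-cut of a simple graph `G`: a partition `(A, B)` of the vertex set into two
nonempty parts such that every vertex of `A` has at most `d` neighbors in `B` and
every vertex of `B` has at most `d` neighbors in `A`. -/
def IsDCut (G : SimpleGraph V) (d : ℕ) (A B : Set V) : Prop :=
  A.Nonempty ∧ B.Nonempty ∧ Disjoint A B ∧ A ∪ B = Set.univ ∧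
    (∀ v ∈ A, (G.neighborSet v ∩ B).ncard ≤ d) ∧
    (∀ v ∈ B, (G.neighborSet v ∩ A).ncard ≤ d)

/-- A vertex set `T` is monochromatic if every `d`-cut of `G` has `T` entirely on one side. -/
def Monochromatic (G : SimpleGraph V) (d : ℕ) (T : Set V) : Prop :=
  ∀ A B : Set V, IsDCut G d A B → T ⊆ A ∨ T ⊆ B

/-- The edge cut of a cut `(A, B)`: the set of edges of `G` with one endpoint in `A`
and the other endpoint in `B`. -/
def edgeCut (G : SimpleGraph V) (A B : Set V) : Set (Sym2 V) :=
  {e | e ∈ G.edgeSet ∧ ∃ u v, e = s(u, v) ∧ u ∈ A ∧ v ∈ B}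

/-- A minimal `d`-cut: no `d`-cut has an edge cut that is a proper subset of its edge cut. -/
def IsMinimalDCut (G : SimpleGraph V) (d : ℕ) (A B : Set V) : Prop :=
  IsDCut G d A B ∧ ∀ A' B' : Set V, IsDCut G d A' B' → ¬ edgeCut G A' B' ⊂ edgeCut G A B

/-- A maximal `d`-cut: no `d`-cut has an edge cut that properly contains its edge cut. -/
def IsMaximalDCut (G : SimpleGraph V) (d : ℕ) (A B : Set V) : Prop :=
  IsDCut G d A B ∧ ∀ A' B' : Set V, IsDCut G d A' B' → ¬ edgeCut G A B ⊂ edgeCut G A' B'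

/-- The graph obtained from `G` by attaching a pendant clique of `r` new vertices to `u`:
the `r` new vertices are pairwise adjacent, each of them is adjacent to `u`, and no
other edges are added. -/
def attachPendantClique (G : SimpleGraph V) (u : V) (r : ℕ) :
    SimpleGraph (V ⊕ Fin r) :=
  SimpleGraph.fromRel (fun a b =>
    (∃ x y : V, a = Sum.inl x ∧ b = Sum.inl y ∧ G.Adj x y) ∨
    (∃ c : Fin r, a = Sum.inl u ∧ b = Sum.inr c) ∨
    (∃ c c' : Fin r, a = Sum.inr c ∧ b = Sum.inr c'))

/-!
A vertex on one side of a `d`-cut is adjacent to every other vertex of a clique containing it,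
so a clique meets each side of a `d`-cut in at most `d` vertices unless it lies entirely on one
side; hence every clique with more than `2d` vertices is monochromatic. The pendant clique
together with its root `u` is a clique on `r + 1 > 2d` vertices that contains every neighbour
of a clique vertex, so no edge at a clique vertex can cross a `d`-cut.
-/

variable {W : Type*}

theorem IsDCut.symm {G : SimpleGraph W} {d : ℕ} {A B : Set W} (h : IsDCut G d A B) :
    IsDCut G d B A :=
  let ⟨hA, hB, hdisj, huniv, hAd, hBd⟩ := h
  ⟨hB, hA, hdisj.symm, Set.union_comm A B ▸ huniv, hBd, hAd⟩

theorem IsDCut.ncard_inter_le_of_isClique [Finite W] {G : SimpleGraph W} {d : ℕ}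
    {A B K : Set W} (h : IsDCut G d A B) (hK : G.IsClique K) {v : W} (hvK : v ∈ K)
    (hvA : v ∈ A) : (K ∩ B).ncard ≤ d := by
  have hsub : K ∩ B ⊆ G.neighborSet v ∩ B := fun w ⟨hwK, hwB⟩ =>
    ⟨hK hvK hwK fun hvw => Set.disjoint_left.mp h.2.2.1 hvA (hvw ▸ hwB), hwB⟩
  exact (Set.ncard_le_ncard hsub).trans (h.2.2.2.2.1 v hvA)

theorem SimpleGraph.IsClique.monochromatic [Finite W] {G : SimpleGraph W} {d : ℕ} {K : Set W}
    (hK : G.IsClique K) (hcard : 2 * d < K.ncard) : Monochromatic G d K := by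
  intro A B h
  by_contra! hsplit
  obtain ⟨⟨a, haK, haA⟩, ⟨b, hbK, hbB⟩⟩ := And.imp Set.not_subset.mp Set.not_subset.mp hsplit
  have hmem : ∀ v, v ∈ A ∨ v ∈ B := fun v =>
    (Set.mem_union v A B).mp (h.2.2.2.1 ▸ Set.mem_univ v)
  have hB : (K ∩ B).ncard ≤ d :=
    h.ncard_inter_le_of_isClique hK hbK ((hmem b).resolve_right hbB)
  have hA : (K ∩ A).ncard ≤ d :=
    h.symm.ncard_inter_le_of_isClique hK haK ((hmem a).resolve_left haA)
  have hcover : K = (K ∩ A) ∪ (K ∩ B) := by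
    rw [← Set.inter_union_distrib_left, h.2.2.2.1, Set.inter_univ]
  have := Set.ncard_union_le (K ∩ A) (K ∩ B)
  rw [← hcover] at this
  omega

theorem Monochromatic.notMem_of_mem_edgeCut {G : SimpleGraph W} {d : ℕ} {T A B : Set W}
    {x : W} {e : Sym2 W} (hT : Monochromatic G d T) (hAB : IsDCut G d A B) (hx : x ∈ T)
    (hN : G.neighborSet x ⊆ T) (he : e ∈ edgeCut G A B) : x ∉ e := by
  obtain ⟨hadj, p, q, rfl, hpA, hqB⟩ := he
  intro hxe
  have hpq : p ∈ T ∧ q ∈ T := by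
    rcases Sym2.mem_iff.mp hxe with rfl | rfl
    · exact ⟨hx, hN hadj⟩
    · exact ⟨hN (G.adj_symm hadj), hx⟩
  rcases hT A B hAB with hTA | hTB
  · exact Set.disjoint_left.mp hAB.2.2.1 (hTA hpq.2) hqB
  · exact Set.disjoint_left.mp hAB.2.2.1 hpA (hTB hpq.1)

def pendantCliqueWithRoot (u : V) (r : ℕ) : Set (V ⊕ Fin r) :=
  insert (Sum.inl u) (Set.range Sum.inr)

section PendantClique

variable (G : SimpleGraph V) (u : V) (r : ℕ)

theorem ncard_pendantCliqueWithRoot : (pendantCliqueWithRoot u r).ncard = r + 1 := by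
  rw [pendantCliqueWithRoot, Set.ncard_insert_of_notMem (by simp),
    Set.ncard_range_of_injective Sum.inr_injective, Nat.card_eq_fintype_card, Fintype.card_fin]

theorem isClique_pendantCliqueWithRoot :
    (attachPendantClique G u r).IsClique (pendantCliqueWithRoot u r) := by
  rintro (x | c) hx (y | c') hy hne <;>
    simp_all [pendantCliqueWithRoot, attachPendantClique]

theorem neighborSet_inr_subset_pendantCliqueWithRoot (c : Fin r) :
    (attachPendantClique G u r).neighborSet (Sum.inr c) ⊆ pendantCliqueWithRoot u r := by
  rintro (x | c') hadj <;> simp_all [pendantCliqueWithRoot, attachPendantClique]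

end PendantClique

theorem pendantClique_edges_not_in_cut_general [Fintype V] (G : SimpleGraph V) (d : ℕ)
    (u : V) (r : ℕ) (hr : 2 * d + 1 ≤ r)
    (A B : Set (V ⊕ Fin r)) (hAB : IsDCut (attachPendantClique G u r) d A B) :
    ∀ e ∈ edgeCut (attachPendantClique G u r) A B, ∀ c : Fin r, Sum.inr c ∉ e := by
  intro e he c
  have hmono : Monochromatic (attachPendantClique G u r) d (pendantCliqueWithRoot u r) :=
    (isClique_pendantCliqueWithRoot G u r).monochromatic
      (by rw [ncard_pendantCliqueWithRoot]; omega)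
  exact hmono.notMem_of_mem_edgeCut hAB (Set.mem_insert_of_mem _ ⟨c, rfl⟩)
    (neighborSet_inr_subset_pendantCliqueWithRoot G u r c) he

/-- If a pendant clique `C` of `r ≥ 2d+1` vertices is attached to `u`, then no edge with
an endpoint in `C` belongs to the edge cut of any `d`-cut of the resulting graph. -/
theorem pendantClique_edges_not_in_cut [Fintype V] (G : SimpleGraph V) (d : ℕ)
    (hd : 1 ≤ d) (u : V) (r : ℕ) (hr : 2 * d + 1 ≤ r)
    (A B : Set (V ⊕ Fin r)) (hAB : IsDCut (attachPendantClique G u r) d A B) :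
    ∀ e ∈ edgeCut (attachPendantClique G u r) A B, ∀ c : Fin r, Sum.inr c ∉ e :=
  pendantClique_edges_not_in_cut_general G d u r hr A B hAB
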